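/- arXiv:1511.08453 — 2 statements merged into one kernel-verified Lean document; each statement's English description precedes it below -/
import Mathlib

section
/- Consider the one-dimensional problem −(A^ε(u^ε)')' + b(u^ε)' = f on Ω = (0,L) with homogeneous Dirichlet boundary conditions, b ≠ 0 constant, f ∈ L²(0,L), and 0 < α₁ ≤ A^ε(x) ≤ α₂ a.e. If f ≡ 1 (constant), then 0 ≤ u^ε(x) ≤ α₂L/(α₁|b|) for all x ∈ [0,L], and moreover |u^ε|²_{H¹(Ω)} ≤ α₂L²/(α₁²|b|). -/
/-!
Testing the weak formulation with primitives of mean-zero `L²` functions (du Bois-Reymond) shows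
that the flux `A u'` equals `b u - x + c` a.e. for a constant `c`. Since `A > 0`, `u` is
nondecreasing where this flux is nonnegative and nonincreasing where it is nonpositive, while the
flux drops at rate at least one wherever `b · flux ≤ 0`; so it changes sign at most once, from `+`
to `-`. Hence `u` rises to a single turning point `a` and then falls, which with
`u(0) = u(L) = 0` gives `u ≥ 0`; at an interior `a` the flux vanishes, so
`|b| u(a) = |a - c| ≤ L`, and `L / |b| ≤ α₂ L / (α₁ |b|)`. Testing with `u` itself gives
`α₁ ∫ u'² ≤ ∫ A u'² = ∫ u ≤ L² / |b|`, the convective term `b ∫ u' u = b (u(L)² - u(0)²) / 2`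
vanishing.
-/

open MeasureTheory Set

lemma exists_first_nonneg {f : ℝ → ℝ} {p q : ℝ} (hpq : p ≤ q) (hf : ContinuousOn f (Icc p q))
    (hp : f p < 0) (hq : 0 ≤ f q) : ∃ r ∈ Ioc p q, 0 ≤ f r ∧ ∀ t ∈ Ico p r, f t < 0 := by
  set S := Icc p q ∩ f ⁻¹' Ici 0
  have hS : IsClosed S := hf.preimage_isClosed_of_isClosed isClosed_Icc isClosed_Ici
  have hbdd : BddBelow S := ⟨p, fun t ht => ht.1.1⟩
  have hr : sInf S ∈ S := hS.csInf_mem ⟨q, ⟨hpq, le_rfl⟩, hq⟩ hbdd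
  refine ⟨sInf S, ⟨hr.1.1.lt_of_ne ?_, hr.1.2⟩, hr.2, fun t ht => ?_⟩
  · rintro h
    exact hp.not_ge (h ▸ hr.2)
  · by_contra! h
    exact ht.2.not_ge (csInf_le hbdd ⟨⟨ht.1, ht.2.le.trans hr.1.2⟩, h⟩)

lemma exists_last_nonpos {f : ℝ → ℝ} {p q : ℝ} (hpq : p ≤ q) (hf : ContinuousOn f (Icc p q))
    (hp : f p ≤ 0) (hq : 0 < f q) : ∃ r ∈ Ico p q, f r ≤ 0 ∧ ∀ t ∈ Ioc r q, 0 < f t := by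
  set S := Icc p q ∩ f ⁻¹' Iic 0
  have hS : IsClosed S := hf.preimage_isClosed_of_isClosed isClosed_Icc isClosed_Iic
  have hbdd : BddAbove S := ⟨q, fun t ht => ht.1.2⟩
  have hr : sSup S ∈ S := hS.csSup_mem ⟨p, ⟨le_rfl, hpq⟩, hp⟩ hbdd
  refine ⟨sSup S, ⟨hr.1.1, hr.1.2.lt_of_ne ?_⟩, hr.2, fun t ht => ?_⟩
  · rintro h
    exact hq.not_ge (h ▸ hr.2)
  · by_contra! h
    exact ht.1.not_ge (le_csSup hbdd ⟨⟨hr.1.1.trans ht.1.le, ht.2⟩, h⟩)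

/-- Integrating `-(A u')' + b u' = 1` gives `A u' = flux b c u` for some constant `c`. -/
def flux (b c : ℝ) (u : ℝ → ℝ) (x : ℝ) : ℝ := b * u x - x + c

lemma continuousOn_flux {b c : ℝ} {u : ℝ → ℝ} {s : Set ℝ} (hu : ContinuousOn u s) :
    ContinuousOn (flux b c u) s :=
  ((continuousOn_const.mul hu).sub continuousOn_id).add continuousOn_const

/-- `u` is nondecreasing where `φ ≥ 0` and nonincreasing where `φ ≤ 0` (take `k = ±1`, or
`k = -b` to compare with `b * φ`). -/
def VariesWithSignOf (u φ : ℝ → ℝ) (L : ℝ) : Prop :=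
  ∀ k s t, 0 ≤ s → s ≤ t → t ≤ L → (∀ τ ∈ Ioo s t, 0 ≤ k * φ τ) → 0 ≤ k * (u t - u s)

section MaximumPrinciple

variable {u : ℝ → ℝ} {b c L : ℝ}

lemma flux_lt_of_mul_flux_nonpos (hsign : VariesWithSignOf u (flux b c u) L) {s t : ℝ}
    (hs : 0 ≤ s) (hst : s < t) (ht : t ≤ L) (h : ∀ τ ∈ Ioo s t, b * flux b c u τ ≤ 0) :
    flux b c u t < flux b c u s := by
  have := hsign (-b) s t hs hst.le ht fun τ hτ => by linarith [h τ hτ]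
  simp only [flux]
  linarith

lemma flux_nonpos_of_flux_neg (hsign : VariesWithSignOf u (flux b c u) L) (hb : b ≠ 0)
    (hu : ContinuousOn u (Icc 0 L)) {s t : ℝ}
    (hs : 0 ≤ s) (hst : s ≤ t) (ht : t ≤ L) (hneg : flux b c u s < 0) : flux b c u t ≤ 0 := by
  by_contra! hpos
  have hcont : ContinuousOn (flux b c u) (Icc s t) :=
    continuousOn_flux (hu.mono (Icc_subset_Icc hs ht))
  rcases hb.lt_or_gt with hb | hb
  · obtain ⟨r, hr, hfr, hgt⟩ := exists_last_nonpos hst hcont hneg.le hpos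
    have := flux_lt_of_mul_flux_nonpos hsign (hs.trans hr.1) hr.2 ht
      fun τ hτ => mul_nonpos_of_nonpos_of_nonneg hb.le (hgt τ (Ioo_subset_Ioc_self hτ)).le
    linarith
  · obtain ⟨r, hr, hfr, hlt⟩ := exists_first_nonneg hst hcont hneg hpos.le
    have := flux_lt_of_mul_flux_nonpos hsign hs hr.1 (hr.2.trans ht)
      fun τ hτ => mul_nonpos_of_nonneg_of_nonpos hb.le (hlt τ (Ioo_subset_Ico_self hτ)).le
    linarith

lemma exists_flux_nonneg_left_nonpos_right (hsign : VariesWithSignOf u (flux b c u) L)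
    (hb : b ≠ 0) (hu : ContinuousOn u (Icc 0 L)) (hL : 0 ≤ L) :
    ∃ a ∈ Icc 0 L, (∀ t ∈ Ico 0 a, 0 ≤ flux b c u t) ∧ ∀ t ∈ Ioc a L, flux b c u t ≤ 0 := by
  set S := insert L {t ∈ Icc 0 L | flux b c u t < 0}
  have hbdd : BddBelow S := ⟨0, by rintro t (rfl | ⟨ht, -⟩); exacts [hL, ht.1]⟩
  have hne : S.Nonempty := ⟨L, mem_insert _ _⟩
  have haL : sInf S ≤ L := csInf_le hbdd (mem_insert _ _)
  refine ⟨sInf S, ⟨le_csInf hne ?_, haL⟩, fun t ht => ?_, fun t ht => ?_⟩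
  · rintro t (rfl | ⟨ht, -⟩); exacts [hL, ht.1]
  · by_contra! h
    exact ht.2.not_ge (csInf_le hbdd (Or.inr ⟨⟨ht.1, ht.2.le.trans haL⟩, h⟩))
  · obtain ⟨s, hs, hst⟩ := exists_lt_of_csInf_lt hne ht.1
    rcases hs with rfl | ⟨hs, hneg⟩
    · exact absurd ht.2 hst.not_ge
    · exact flux_nonpos_of_flux_neg hsign hb hu hs.1 hst.le ht.2 hneg

theorem VariesWithSignOf.maximum_principle (hsign : VariesWithSignOf u (flux b c u) L)
    (hb : b ≠ 0) (hu : ContinuousOn u (Icc 0 L)) (hL : 0 ≤ L) (hu0 : u 0 = 0) (huL : u L = 0) :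
    ∀ x ∈ Icc 0 L, 0 ≤ u x ∧ |b| * u x ≤ L := by
  obtain ⟨a, ha, hleft, hright⟩ := exists_flux_nonneg_left_nonpos_right hsign hb hu hL
  have hup : ∀ s t, 0 ≤ s → s ≤ t → t ≤ a → u s ≤ u t := fun s t hs hst ht => by
    simpa using hsign 1 s t hs hst (ht.trans ha.2)
      fun τ hτ => by simpa using hleft τ ⟨hs.trans hτ.1.le, hτ.2.trans_le ht⟩
  have hdown : ∀ s t, a ≤ s → s ≤ t → t ≤ L → u t ≤ u s := fun s t hs hst ht => by
    simpa using hsign (-1) s t (ha.1.trans hs) hst ht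
      fun τ hτ => by simpa using hright τ ⟨hs.trans_lt hτ.1, hτ.2.le.trans ht⟩
  have hnonneg : ∀ x ∈ Icc 0 L, 0 ≤ u x := fun x hx => by
    rcases le_total x a with hxa | hax
    · exact hu0 ▸ hup 0 x le_rfl hx.1 hxa
    · exact huL ▸ hdown x L hax hx.2 le_rfl
  have hmax : ∀ x ∈ Icc 0 L, u x ≤ u a := fun x hx => by
    rcases le_total x a with hxa | hax
    · exact hup x a hx.1 hxa le_rfl
    · exact hdown a x le_rfl hax hx.2
  suffices |b * u a| ≤ L by
    intro x hx
    refine ⟨hnonneg x hx, ?_⟩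
    rw [abs_mul, abs_of_nonneg (hnonneg a ha)] at this
    exact (mul_le_mul_of_nonneg_left (hmax x hx) (abs_nonneg b)).trans this
  rcases ha.1.eq_or_lt with rfl | h0a
  · simpa [hu0] using hL
  rcases ha.2.eq_or_lt with rfl | haL
  · simpa [huL] using hL
  have hφ : ContinuousOn (flux b c u) (Icc 0 L) := continuousOn_flux hu
  -- the flux vanishes at the interior turning point `a`
  have hφa₁ : 0 ≤ flux b c u a :=
    ContinuousWithinAt.closure_le (s := Ioo 0 a) (by simp [closure_Ioo h0a.ne, h0a.le])
      continuousWithinAt_const ((hφ a ha).mono (Ioo_subset_Icc_self.trans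
        (Icc_subset_Icc le_rfl ha.2))) fun t ht => hleft t (Ioo_subset_Ico_self ht)
  have hφa₂ : flux b c u a ≤ 0 :=
    ContinuousWithinAt.closure_le (s := Ioo a L) (by simp [closure_Ioo haL.ne, haL.le])
      ((hφ a ha).mono (Ioo_subset_Icc_self.trans (Icc_subset_Icc ha.1 le_rfl)))
      continuousWithinAt_const fun t ht => hright t (Ioo_subset_Ioc_self ht)
  have hφ0 := hleft 0 ⟨le_rfl, h0a⟩
  have hφL := hright L ⟨haL, le_rfl⟩
  simp only [flux, hu0, huL] at hφa₁ hφa₂ hφ0 hφL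
  rw [abs_le]
  constructor <;> linarith

end MaximumPrinciple

lemma ContinuousOn.memLp_restrict_Ioo {f : ℝ → ℝ} {a b : ℝ} (hf : ContinuousOn f (Icc a b))
    (p : ENNReal) : MemLp f p (volume.restrict (Ioo a b)) := by
  obtain ⟨C, hC⟩ := isCompact_Icc.exists_bound_of_continuousOn hf
  exact MemLp.of_bound ((hf.mono Ioo_subset_Icc_self).aestronglyMeasurable measurableSet_Ioo) C
    ((ae_restrict_mem measurableSet_Ioo).mono fun x hx => hC x (Ioo_subset_Icc_self hx))

lemma continuousOn_of_eq_primitive {u u' : ℝ → ℝ} {L : ℝ} (hL : 0 ≤ L)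
    (hu : ∀ x ∈ Icc 0 L, u x = ∫ t in 0..x, u' t) (hu' : IntegrableOn u' (Ioo 0 L)) :
    ContinuousOn u (Icc 0 L) := by
  have := intervalIntegral.continuousOn_primitive_interval (a := 0) (b := L) (μ := volume)
    (f := u') (by rwa [uIcc_of_le hL, integrableOn_Icc_iff_integrableOn_Ioo])
  rw [uIcc_of_le hL] at this
  exact this.congr hu

lemma setIntegral_Ioo_eq_intervalIntegral {f : ℝ → ℝ} {a b : ℝ} (hab : a ≤ b) :
    ∫ x in Ioo a b, f x = ∫ x in a..b, f x := by
  rw [intervalIntegral.integral_of_le hab, integral_Ioc_eq_integral_Ioo]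

theorem integral_mul_eq_sub_integral_of_eq_primitive {u u' v v' : ℝ → ℝ} {L : ℝ} (hL : 0 ≤ L)
    (hu : ∀ x ∈ Icc 0 L, u x = ∫ t in 0..x, u' t) (hv : ∀ x ∈ Icc 0 L, v x = ∫ t in 0..x, v' t)
    (hu' : IntegrableOn u' (Ioo 0 L)) (hv' : IntegrableOn v' (Ioo 0 L)) :
    ∫ x in Ioo 0 L, u x * v' x = u L * v L - ∫ x in Ioo 0 L, u' x * v x := by
  rw [← intervalIntegrable_iff_integrableOn_Ioo_of_le hL] at hu' hv'
  have hU := hu'.absolutelyContinuousOnInterval_intervalIntegral (c := 0) (by simp)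
  have hV := hv'.absolutelyContinuousOnInterval_intervalIntegral (c := 0) (by simp)
  have hLmem : L ∈ Icc 0 L := right_mem_Icc.2 hL
  have hae : ∀ᵐ x, x ∈ uIoc 0 L →
      u x = (∫ t in 0..x, u' t) ∧ v x = (∫ t in 0..x, v' t) ∧
        deriv (fun x => ∫ t in 0..x, u' t) x = u' x ∧
        deriv (fun x => ∫ t in 0..x, v' t) x = v' x := by
    filter_upwards [hu'.ae_hasDerivAt_integral, hv'.ae_hasDerivAt_integral] with x hdu hdv hx
    rw [uIoc_of_le hL] at hx
    have hx' : x ∈ uIcc 0 L := by rw [uIcc_of_le hL]; exact Ioc_subset_Icc_self hx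
    exact ⟨hu x (Ioc_subset_Icc_self hx), hv x (Ioc_subset_Icc_self hx),
      (hdu hx' 0 left_mem_uIcc).deriv, (hdv hx' 0 left_mem_uIcc).deriv⟩
  have h₁ : ∫ x in 0..L, u x * v' x =
      ∫ x in 0..L, (∫ t in 0..x, u' t) * deriv (fun x => ∫ t in 0..x, v' t) x :=
    intervalIntegral.integral_congr_ae (hae.mono fun x hx hxI => by
      rw [(hx hxI).1, (hx hxI).2.2.2])
  have h₂ : ∫ x in 0..L, u' x * v x =
      ∫ x in 0..L, deriv (fun x => ∫ t in 0..x, u' t) x * ∫ t in 0..x, v' t :=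
    intervalIntegral.integral_congr_ae (hae.mono fun x hx hxI => by
      rw [(hx hxI).2.1, (hx hxI).2.2.1])
  rw [setIntegral_Ioo_eq_intervalIntegral hL, setIntegral_Ioo_eq_intervalIntegral hL, h₁, h₂,
    hU.integral_mul_deriv_eq_deriv_mul hV, hu L hLmem, hv L hLmem]
  simp

theorem variesWithSignOf_of_ae_mul_eq {u u' A φ : ℝ → ℝ} {L : ℝ}
    (hu : ∀ x ∈ Icc 0 L, u x = ∫ t in 0..x, u' t) (hu' : IntegrableOn u' (Ioo 0 L))
    (hA : ∀ᵐ x ∂volume.restrict (Ioo 0 L), 0 < A x ∧ A x * u' x = φ x) :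
    VariesWithSignOf u φ L := by
  intro k s t hs hst ht hφ
  have hint : ∀ x ∈ Icc 0 L, IntervalIntegrable u' volume 0 x := fun x hx =>
    (intervalIntegrable_iff_integrableOn_Ioo_of_le hx.1).2
      (hu'.mono_set (Ioo_subset_Ioo_right hx.2))
  have hsL : s ∈ Icc 0 L := ⟨hs, hst.trans ht⟩
  have htL : t ∈ Icc 0 L := ⟨hs.trans hst, ht⟩
  rw [hu t htL, hu s hsL, intervalIntegral.integral_interval_sub_left (hint t htL) (hint s hsL),
    ← setIntegral_Ioo_eq_intervalIntegral hst, ← integral_const_mul]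
  refine setIntegral_nonneg_of_ae_restrict ?_
  filter_upwards [ae_restrict_of_ae_restrict_of_subset (Ioo_subset_Ioo hs ht) hA,
    ae_restrict_mem measurableSet_Ioo] with τ ⟨hApos, hAeq⟩ hτ
  have : 0 ≤ A τ * (k * u' τ) := by rw [mul_left_comm, hAeq]; exact hφ τ hτ
  exact (mul_nonneg_iff_of_pos_left hApos).1 this

theorem aemeasurable_of_linear_system {α : Type*} [MeasurableSpace α] {μ : Measure α}
    {p q a₁ b₁ a₂ b₂ : α → ℝ} (ha₁ : AEMeasurable a₁ μ) (hb₁ : AEMeasurable b₁ μ)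
    (ha₂ : AEMeasurable a₂ μ) (hb₂ : AEMeasurable b₂ μ)
    (h₁ : AEMeasurable (fun x => p x * a₁ x + q x * b₁ x) μ)
    (h₂ : AEMeasurable (fun x => p x * a₂ x + q x * b₂ x) μ)
    (hdet : ∀ᵐ x ∂μ, a₁ x * b₂ x - a₂ x * b₁ x ≠ 0) :
    AEMeasurable p μ ∧ AEMeasurable q μ := by
  have hD := (ha₁.mul hb₂).sub (ha₂.mul hb₁)
  constructor
  · refine (((h₁.mul hb₂).sub (h₂.mul hb₁)).div hD).congr ?_
    filter_upwards [hdet] with x hx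
    simp only [Pi.sub_apply, Pi.mul_apply, Pi.div_apply]
    rw [div_eq_iff hx]
    ring
  · refine (((ha₁.mul h₂).sub (ha₂.mul h₁)).div hD).congr ?_
    filter_upwards [hdet] with x hx
    simp only [Pi.sub_apply, Pi.mul_apply, Pi.div_apply]
    rw [div_eq_iff hx]
    ring

theorem ae_eq_average_of_forall_integral_mul_eq_zero {α : Type*} [MeasurableSpace α]
    {μ : Measure α} [IsFiniteMeasure μ] {G : α → ℝ} (hG : MemLp G 2 μ)
    (h : ∀ w, MemLp w 2 μ → ∫ x, w x ∂μ = 0 → ∫ x, w x * G x ∂μ = 0) :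
    ∀ᵐ x ∂μ, G x = ⨍ y, G y ∂μ := by
  set c := ⨍ y, G y ∂μ
  have hw : MemLp (fun x => G x - c) 2 μ := hG.sub (memLp_const c)
  have hsq : ∫ x, (G x - c) ^ 2 ∂μ = 0 := by
    have hsplit : ∀ x, (G x - c) ^ 2 = (G x - c) * G x - (G x - c) * c := fun x => by ring
    simp_rw [hsplit]
    rw [integral_sub (f := fun x => (G x - c) * G x) (hw.integrable_mul hG)
      ((hw.integrable one_le_two).mul_const c), integral_mul_const,
      h _ hw (integral_sub_average μ G), integral_sub_average, zero_mul, sub_zero]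
  filter_upwards [(integral_eq_zero_iff_of_nonneg (fun x => sq_nonneg _) hw.integrable_sq).1 hsq]
    with x hx
  simpa [sub_eq_zero] using hx

/-- `v ∈ H¹₀(0, L)` with weak derivative `v'`. -/
def IsH01 (L : ℝ) (v v' : ℝ → ℝ) : Prop :=
  (∀ x ∈ Icc 0 L, v x = ∫ t in 0..x, v' t) ∧ v L = 0 ∧ IntegrableOn (fun x => v' x ^ 2) (Ioo 0 L)

lemma IsH01.of_hasDerivAt {L : ℝ} {v v' : ℝ → ℝ} (hv : ∀ x, HasDerivAt v (v' x) x)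
    (hv' : Continuous v') (hv0 : v 0 = 0) (hvL : v L = 0) : IsH01 L v v' :=
  ⟨fun x _ => by
    rw [intervalIntegral.integral_eq_sub_of_hasDerivAt (fun t _ => hv t)
      (hv'.intervalIntegrable _ _), hv0, sub_zero],
    hvL, (hv'.pow 2).integrableOn_Icc.mono_set Ioo_subset_Icc_self⟩

/-- `-p' + q = 1` weakly on `(0, L)`; the problem at hand has `p = A u'` and `q = b u'`. -/
def IsWeakSolution (L : ℝ) (p q : ℝ → ℝ) : Prop :=
  ∀ v v', IsH01 L v v' → ∫ x in Ioo 0 L, (p x * v' x + q x * v x) = ∫ x in Ioo 0 L, v x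

namespace IsWeakSolution

variable {L : ℝ} {p q : ℝ → ℝ}

lemma integrable_of_pos (hsol : IsWeakSolution L p q) (hL : 0 < L) {v v' : ℝ → ℝ}
    (hv : IsH01 L v v') (hvc : Continuous v) (hpos : ∀ x ∈ Ioo 0 L, 0 < v x) :
    Integrable (fun x => p x * v' x + q x * v x) (volume.restrict (Ioo 0 L)) := by
  refine Integrable.of_integral_ne_zero ?_
  rw [hsol v v' hv, setIntegral_Ioo_eq_intervalIntegral hL.le]
  exact (intervalIntegral.intervalIntegral_pos_of_pos_on (hvc.intervalIntegrable _ _) hpos hL).ne'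

/-- The weak form makes `p v' + q v` integrable whenever `∫ v > 0`; two such test functions with
Wronskian `v₁' v₂ - v₂' v₁ = -(x (L - x))²` recover `p` and `q` by Cramer's rule. -/
lemma aemeasurable (hsol : IsWeakSolution L p q) (hL : 0 < L) :
    AEMeasurable p (volume.restrict (Ioo 0 L)) ∧ AEMeasurable q (volume.restrict (Ioo 0 L)) := by
  have h₁ := hsol.integrable_of_pos hL (v := fun x => x * (L - x)) (v' := fun x => L - 2 * x)
    (.of_hasDerivAt (fun x => ((hasDerivAt_id' x).mul
      ((hasDerivAt_id' x).const_sub L)).congr_deriv (by ring)) (by fun_prop) (by ring) (by ring))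
    (by fun_prop) fun x hx => mul_pos hx.1 (sub_pos.2 hx.2)
  have h₂ := hsol.integrable_of_pos hL (v := fun x => x ^ 2 * (L - x))
    (v' := fun x => 2 * L * x - 3 * x ^ 2)
    (.of_hasDerivAt (fun x => ((hasDerivAt_pow 2 x).mul
      ((hasDerivAt_id' x).const_sub L)).congr_deriv (by push_cast; ring)) (by fun_prop) (by ring)
      (by ring))
    (by fun_prop) fun x hx => mul_pos (pow_pos hx.1 2) (sub_pos.2 hx.2)
  refine aemeasurable_of_linear_system (by fun_prop) (by fun_prop) (by fun_prop)
    (by fun_prop) h₁.aemeasurable h₂.aemeasurable ?_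
  filter_upwards [ae_restrict_mem measurableSet_Ioo] with x hx
  have hdet : (L - 2 * x) * (x ^ 2 * (L - x)) - (2 * L * x - 3 * x ^ 2) * (x * (L - x))
      = -(x * (L - x)) ^ 2 := by ring
  rw [hdet, neg_ne_zero]
  exact pow_ne_zero 2 (mul_pos hx.1 (sub_pos.2 hx.2)).ne'

variable {b : ℝ} {u u' : ℝ → ℝ}

lemma integral_mul_eq_zero (hsol : IsWeakSolution L p (fun x => b * u' x)) (hL : 0 ≤ L)
    (hu : ∀ x ∈ Icc 0 L, u x = ∫ t in 0..x, u' t) (huL : u L = 0)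
    (hp : MemLp p 2 (volume.restrict (Ioo 0 L))) (hu' : MemLp u' 2 (volume.restrict (Ioo 0 L)))
    {w : ℝ → ℝ} (hw : MemLp w 2 (volume.restrict (Ioo 0 L))) (hw0 : ∫ x in Ioo 0 L, w x = 0) :
    ∫ x in Ioo 0 L, w x * (p x - b * u x + x) = 0 := by
  set W : ℝ → ℝ := fun x => ∫ t in 0..x, w t
  have hwint : IntegrableOn w (Ioo 0 L) := hw.integrable one_le_two
  have hu'int : IntegrableOn u' (Ioo 0 L) := hu'.integrable one_le_two
  have hW : IsH01 L W w := ⟨fun _ _ => rfl, (setIntegral_Ioo_eq_intervalIntegral hL).symm.trans hw0,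
    (memLp_two_iff_integrable_sq hw.1).1 hw⟩
  have hWL2 := (continuousOn_of_eq_primitive hL hW.1 hwint).memLp_restrict_Ioo 2
  have huL2 := (continuousOn_of_eq_primitive hL hu hu'int).memLp_restrict_Ioo 2
  have hpw : Integrable (fun x => p x * w x) (volume.restrict (Ioo 0 L)) := hp.integrable_mul hw
  have huw : Integrable (fun x => u x * w x) (volume.restrict (Ioo 0 L)) := huL2.integrable_mul hw
  have hu'W : Integrable (fun x => u' x * W x) (volume.restrict (Ioo 0 L)) :=
    hu'.integrable_mul hWL2
  have hxw : Integrable (fun x => x * w x) (volume.restrict (Ioo 0 L)) :=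
    (continuousOn_id.memLp_restrict_Ioo 2).integrable_mul hw
  have hweak := hsol W w hW
  simp only [mul_assoc] at hweak
  rw [integral_add hpw (hu'W.const_mul b), integral_const_mul] at hweak
  have hibp₁ := integral_mul_eq_sub_integral_of_eq_primitive hL hu hW.1 hu'int hwint
  have hibp₂ := integral_mul_eq_sub_integral_of_eq_primitive (u := fun x => x) (u' := fun _ => 1)
    hL (fun x _ => by simp) hW.1 (integrableOn_const measure_Ioo_lt_top.ne) hwint
  rw [huL, zero_mul] at hibp₁
  rw [hW.2.1, mul_zero] at hibp₂
  simp only [one_mul] at hibp₂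
  calc ∫ x in Ioo 0 L, w x * (p x - b * u x + x)
      = ∫ x in Ioo 0 L, (p x * w x - b * (u x * w x) + x * w x) := by congr 1; ext x; ring
    _ = (∫ x in Ioo 0 L, (p x * w x - b * (u x * w x))) + ∫ x in Ioo 0 L, x * w x :=
      integral_add (hpw.sub (huw.const_mul b)) hxw
    _ = 0 := by
      rw [integral_sub hpw (huw.const_mul b), integral_const_mul]
      linear_combination hweak - b * hibp₁ + hibp₂

lemma exists_ae_eq_flux (hsol : IsWeakSolution L p (fun x => b * u' x)) (hL : 0 ≤ L)
    (hu : ∀ x ∈ Icc 0 L, u x = ∫ t in 0..x, u' t) (huL : u L = 0)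
    (hp : MemLp p 2 (volume.restrict (Ioo 0 L))) (hu' : MemLp u' 2 (volume.restrict (Ioo 0 L))) :
    ∃ c, ∀ᵐ x ∂(volume.restrict (Ioo 0 L)), p x = flux b c u x := by
  have huL2 :=
    (continuousOn_of_eq_primitive hL hu (hu'.integrable one_le_two)).memLp_restrict_Ioo 2
  have hG : MemLp (fun x => p x - b * u x + x) 2 (volume.restrict (Ioo 0 L)) :=
    (hp.sub (huL2.const_mul b)).add (continuousOn_id.memLp_restrict_Ioo 2)
  have hconst := ae_eq_average_of_forall_integral_mul_eq_zero hG fun w hw hw0 =>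
    hsol.integral_mul_eq_zero hL hu huL hp hu' hw hw0
  exact ⟨⨍ y in Ioo 0 L, (p y - b * u y + y), hconst.mono fun x hx => by rw [flux]; linarith⟩

lemma integral_mul_deriv_eq (hsol : IsWeakSolution L p (fun x => b * u' x)) (hL : 0 ≤ L)
    (hu : ∀ x ∈ Icc 0 L, u x = ∫ t in 0..x, u' t) (huL : u L = 0)
    (hp : MemLp p 2 (volume.restrict (Ioo 0 L))) (hu' : MemLp u' 2 (volume.restrict (Ioo 0 L))) :
    ∫ x in Ioo 0 L, p x * u' x = ∫ x in Ioo 0 L, u x := by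
  have hu'int : IntegrableOn u' (Ioo 0 L) := hu'.integrable one_le_two
  have huL2 := (continuousOn_of_eq_primitive hL hu hu'int).memLp_restrict_Ioo 2
  have hpu' : Integrable (fun x => p x * u' x) (volume.restrict (Ioo 0 L)) :=
    hp.integrable_mul hu'
  have hu'u : Integrable (fun x => u' x * u x) (volume.restrict (Ioo 0 L)) :=
    hu'.integrable_mul huL2
  have hibp := integral_mul_eq_sub_integral_of_eq_primitive hL hu hu hu'int hu'int
  simp only [huL, mul_zero, zero_sub, mul_comm (u _)] at hibp
  have hweak := hsol u u' ⟨hu, huL, (memLp_two_iff_integrable_sq hu'.1).1 hu'⟩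
  simp only [mul_assoc] at hweak
  rw [integral_add hpu' (hu'u.const_mul b), integral_const_mul,
    show ∫ x in Ioo 0 L, u' x * u x = 0 by linarith, mul_zero, add_zero] at hweak
  exact hweak

lemma memLp_deriv {A : ℝ → ℝ} {α : ℝ}
    (hsol : IsWeakSolution L (fun x => A x * u' x) (fun x => b * u' x)) (hL : 0 < L) (hb : b ≠ 0)
    (hA : ∀ᵐ x ∂(volume.restrict (Ioo 0 L)), |A x| ≤ α)
    (hu'2 : IntegrableOn (fun x => u' x ^ 2) (Ioo 0 L)) :
    MemLp u' 2 (volume.restrict (Ioo 0 L)) ∧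
      MemLp (fun x => A x * u' x) 2 (volume.restrict (Ioo 0 L)) := by
  obtain ⟨hp, hq⟩ := hsol.aemeasurable hL
  have hu'L2 := (memLp_two_iff_integrable_sq ((hq.const_mul b⁻¹).congr
    (ae_of_all _ fun x => by field_simp)).aestronglyMeasurable).2 hu'2
  refine ⟨hu'L2, (hu'L2.const_mul α).of_le hp.aestronglyMeasurable ?_⟩
  filter_upwards [hA] with x hx
  rw [norm_mul, norm_mul, Real.norm_eq_abs (A x), Real.norm_of_nonneg ((abs_nonneg _).trans hx)]
  exact mul_le_mul_of_nonneg_right hx (norm_nonneg _)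

lemma integral_deriv_sq_le {A : ℝ → ℝ} {α₁ M : ℝ}
    (hsol : IsWeakSolution L (fun x => A x * u' x) (fun x => b * u' x)) (hL : 0 ≤ L)
    (hu : ∀ x ∈ Icc 0 L, u x = ∫ t in 0..x, u' t) (huL : u L = 0)
    (hp : MemLp (fun x => A x * u' x) 2 (volume.restrict (Ioo 0 L)))
    (hu' : MemLp u' 2 (volume.restrict (Ioo 0 L)))
    (hA : ∀ᵐ x ∂(volume.restrict (Ioo 0 L)), α₁ ≤ A x) (hM : ∀ x ∈ Icc 0 L, u x ≤ M) :
    α₁ * ∫ x in Ioo 0 L, u' x ^ 2 ≤ L * M := by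
  have huL2 :=
    (continuousOn_of_eq_primitive hL hu (hu'.integrable one_le_two)).memLp_restrict_Ioo 2
  calc α₁ * ∫ x in Ioo 0 L, u' x ^ 2 = ∫ x in Ioo 0 L, α₁ * u' x ^ 2 :=
      (integral_const_mul _ _).symm
    _ ≤ ∫ x in Ioo 0 L, A x * u' x * u' x :=
      integral_mono_ae (hu'.integrable_sq.const_mul α₁) (hp.integrable_mul hu') (by
        filter_upwards [hA] with x hx
        nlinarith [sq_nonneg (u' x)])
    _ = ∫ x in Ioo 0 L, u x := hsol.integral_mul_deriv_eq hL hu huL hp hu'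
    _ ≤ ∫ _ in Ioo 0 L, M := setIntegral_mono_on (huL2.integrable one_le_two) (integrable_const M)
      measurableSet_Ioo fun x hx => hM x (Ioo_subset_Icc_self hx)
    _ = L * M := by simp [hL]

end IsWeakSolution

/-- one-dimensional problem `−(Aᵉ(uᵉ)')' + b(uᵉ)' = 1` on `(0,L)` with
homogeneous Dirichlet conditions, `b ≠ 0` constant, `0 < α₁ ≤ Aᵉ ≤ α₂` a.e. Then
`0 ≤ uᵉ(x) ≤ α₂ L/(α₁ |b|)` on `[0,L]` and `|uᵉ|²_{H¹} ≤ α₂ L²/(α₁² |b|)`. -/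
theorem stmt2 (L : ℝ) (hL : 0 < L) (b : ℝ) (hb : b ≠ 0)
    (α₁ α₂ : ℝ) (hα₁ : 0 < α₁) (hα₁₂ : α₁ ≤ α₂)
    (A : ℝ → ℝ)
    (hA : ∀ᵐ x ∂(volume.restrict (Set.Ioo (0:ℝ) L)), α₁ ≤ A x ∧ A x ≤ α₂)
    (u u' : ℝ → ℝ)
    (hurep : ∀ x ∈ Set.Icc (0:ℝ) L, u x = ∫ t in (0:ℝ)..x, u' t)
    (huL : u L = 0)
    (hu'2 : IntegrableOn (fun x => u' x ^ 2) (Set.Ioo (0:ℝ) L))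
    (hweak : ∀ v v' : ℝ → ℝ,
      (∀ x ∈ Set.Icc (0:ℝ) L, v x = ∫ t in (0:ℝ)..x, v' t) → v L = 0 →
      IntegrableOn (fun x => v' x ^ 2) (Set.Ioo (0:ℝ) L) →
      (∫ x in Set.Ioo (0:ℝ) L, (A x * u' x * v' x + b * u' x * v x))
        = ∫ x in Set.Ioo (0:ℝ) L, v x) :
    (∀ x ∈ Set.Icc (0:ℝ) L, 0 ≤ u x ∧ u x ≤ α₂ * L / (α₁ * |b|)) ∧
    (∫ x in Set.Ioo (0:ℝ) L, u' x ^ 2) ≤ α₂ * L ^ 2 / (α₁ ^ 2 * |b|) := by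
  have hsol : IsWeakSolution L (fun x => A x * u' x) (fun x => b * u' x) :=
    fun v v' hv => hweak v v' hv.1 hv.2.1 hv.2.2
  obtain ⟨hu', hp⟩ := hsol.memLp_deriv hL hb (α := α₂) (hA.mono fun x hx =>
    abs_le.2 ⟨by linarith [hx.1], hx.2⟩) hu'2
  obtain ⟨c, hflux⟩ := hsol.exists_ae_eq_flux hL.le hurep huL hp hu'
  have hsign : VariesWithSignOf u (flux b c u) L :=
    variesWithSignOf_of_ae_mul_eq hurep (hu'.integrable one_le_two)
      (by filter_upwards [hflux, hA] with x h₁ h₂ using ⟨hα₁.trans_le h₂.1, h₁⟩)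
  have hbound := hsign.maximum_principle hb
    (continuousOn_of_eq_primitive hL.le hurep (hu'.integrable one_le_two)) hL.le
    (by simpa using hurep 0 ⟨le_rfl, hL.le⟩) huL
  have hb' : 0 < |b| := abs_pos.2 hb
  have hM : ∀ x ∈ Icc 0 L, u x ≤ L / |b| := fun x hx => by
    rw [le_div_iff₀ hb', mul_comm]; exact (hbound x hx).2
  have henergy := hsol.integral_deriv_sq_le hL.le hurep huL hp hu' (hA.mono fun x hx => hx.1) hM
  refine ⟨fun x hx => ⟨(hbound x hx).1, (hM x hx).trans ?_⟩, ?_⟩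
  · calc L / |b| = α₁ * L / (α₁ * |b|) := by field_simp
      _ ≤ α₂ * L / (α₁ * |b|) := by gcongr
  · calc ∫ x in Ioo 0 L, u' x ^ 2 ≤ L * (L / |b|) / α₁ := (le_div_iff₀' hα₁).2 henergy
      _ = α₁ * L ^ 2 / (α₁ ^ 2 * |b|) := by field_simp
      _ ≤ α₂ * L ^ 2 / (α₁ ^ 2 * |b|) := by gcongr
end

section
/- In the one-dimensional single-scale problem −αu'' + bu' = f on (0,1) with u(0) = u(1) = 0 and constant b ≠ 0, the MsFEM basis functions built from the full advection-diffusion operator (i.e., solving −αφ'' + bφ' = 0 on each element with affine boundary data) yield a Galerkin stiffness matrix that is tridiagonal with diagonal entries |b|coth(|b|H/(2α)) and off-diagonal entries −b exp(bH/α)/(exp(bH/α)−1) (sub-diagonal) and −b/(exp(bH/α)−1) (super-diagonal). -/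
/-!
On each mesh element a basis function solves `α φ'' = b φ'`, so it is an affine combination of
`1` and `exp (β x)` with `β = b / α`. For such `u` and `v`, `α u' v` is an antiderivative of
`α u' v' + b u' v` (because `α u'' = b u'`), so the element `[x_k, x_{k+1}]` contributes
`b (u x_{k+1} - u x_k) (E v x_{k+1} - v x_k) / (E - 1)` with `E = exp (β H)`. Summing over the
elements with Kronecker nodal values gives
`M i j = b ((E + 1) δ_{ij} - δ_{j,i+1} - E δ_{i,j+1}) / (E - 1)`, and
`b (E + 1) / (E - 1) = b coth (b H / (2 α)) = |b| coth (|b| H / (2 α))`.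
-/

open MeasureTheory Real Set

def IsExpAffineOn (β : ℝ) (f : ℝ → ℝ) (s : Set ℝ) : Prop :=
  ∃ a c : ℝ, EqOn f (fun x => a + c * exp (β * x)) s

lemma hasDerivAt_exp_const_mul (β x : ℝ) :
    HasDerivAt (fun y => exp (β * y)) (β * exp (β * x)) x := by
  simpa [mul_comm] using ((hasDerivAt_id x).const_mul β).exp

namespace IsExpAffineOn

variable {β p q : ℝ} {f : ℝ → ℝ}

lemma of_eqOn_zero {s : Set ℝ} (h : EqOn f 0 s) : IsExpAffineOn β f s :=
  ⟨0, 0, fun x hx => by simp [h hx]⟩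

lemma Icc_of_Ioo (h : IsExpAffineOn β f (Ioo p q)) (hf : Continuous f) (hpq : p < q) :
    IsExpAffineOn β f (Icc p q) := by
  obtain ⟨a, c, hac⟩ := h
  refine ⟨a, c, ?_⟩
  simpa [closure_Ioo hpq.ne] using hac.closure hf (by fun_prop)

end IsExpAffineOn

lemma isExpAffineOn_Ioo_of_deriv_deriv_eq {β p q : ℝ} {f : ℝ → ℝ} (hβ : β ≠ 0)
    (hdiff : ∀ x ∈ Ioo p q, DifferentiableAt ℝ f x ∧ DifferentiableAt ℝ (deriv f) x)
    (hode : ∀ x ∈ Ioo p q, deriv (deriv f) x = β * deriv f x) :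
    IsExpAffineOn β f (Ioo p q) := by
  have hg : ∀ x ∈ Ioo p q, HasDerivAt (fun y => deriv f y * exp (-β * y)) 0 x := by
    intro x hx
    refine ((hdiff x hx).2.hasDerivAt.mul (hasDerivAt_exp_const_mul (-β) x)).congr_deriv ?_
    rw [hode x hx]; ring
  obtain ⟨K, hK⟩ := isOpen_Ioo.exists_is_const_of_deriv_eq_zero isPreconnected_Ioo
    (fun x hx => (hg x hx).differentiableAt.differentiableWithinAt)
    (fun x hx => (hg x hx).deriv)
  have hexp (x : ℝ) : HasDerivAt (fun y => K / β * exp (β * y)) (K * exp (β * x)) x :=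
    ((hasDerivAt_exp_const_mul β x).const_mul (K / β)).congr_deriv (by field_simp)
  obtain ⟨a, ha⟩ := isOpen_Ioo.exists_eq_add_of_deriv_eq isPreconnected_Ioo
    (fun x hx => (hdiff x hx).1.differentiableWithinAt)
    (fun x _ => (hexp x).differentiableAt.differentiableWithinAt)
    (fun x hx => by
      rw [(hexp x).deriv, ← hK x hx, mul_assoc, ← exp_add]
      simp)
  exact ⟨a, K / β, fun x hx => by rw [ha hx]; ring⟩

lemma deriv_eq_of_eqOn_add_mul_exp {β p q a c x : ℝ} {u : ℝ → ℝ}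
    (hu : EqOn u (fun x => a + c * exp (β * x)) (Ioo p q)) (hx : x ∈ Ioo p q) :
    deriv u x = c * β * exp (β * x) := by
  rw [(hu.eventuallyEq_of_mem (isOpen_Ioo.mem_nhds hx)).deriv_eq,
    (((hasDerivAt_exp_const_mul β x).const_mul c).const_add a).deriv]
  ring

lemma intervalIntegral_stiffness_of_eqOn_Ioo {α β b p q a c d g : ℝ} {u v : ℝ → ℝ}
    (hαβ : α * β = b) (hpq : p ≤ q) (hu : EqOn u (fun x => a + c * exp (β * x)) (Ioo p q))
    (hv : EqOn v (fun x => d + g * exp (β * x)) (Ioo p q)) :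
    IntervalIntegrable (fun x => α * deriv u x * deriv v x + b * deriv u x * v x) volume p q ∧
    ∫ x in p..q, α * deriv u x * deriv v x + b * deriv u x * v x
      = b * c * (exp (β * q) * (d + g * exp (β * q)) - exp (β * p) * (d + g * exp (β * p))) := by
  set G : ℝ → ℝ := fun x => b * c * β * exp (β * x) * (d + 2 * g * exp (β * x))
  have hG : EqOn (fun x => α * deriv u x * deriv v x + b * deriv u x * v x) G (Ioo p q) := by
    intro x hx
    simp only [G, deriv_eq_of_eqOn_add_mul_exp hu hx, deriv_eq_of_eqOn_add_mul_exp hv hx, hv hx, ← hαβ]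
    ring
  -- the antiderivative is `α u' v`
  have hF (x : ℝ) :
      HasDerivAt (fun y => b * c * exp (β * y) * (d + g * exp (β * y))) (G x) x := by
    have he := hasDerivAt_exp_const_mul β x
    refine (((he.const_mul (b * c)).mul ((he.const_mul g).const_add d))).congr_deriv ?_
    simp only [G]; ring
  have hint : IntervalIntegrable (fun x => α * deriv u x * deriv v x + b * deriv u x * v x)
      volume p q := by
    rw [intervalIntegrable_iff_integrableOn_Ioo_of_le hpq]
    exact (show Continuous G by fun_prop).integrableOn_Icc.mono_set Ioo_subset_Icc_self
      |>.congr_fun hG.symm measurableSet_Ioo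
  refine ⟨hint, ?_⟩
  rw [intervalIntegral.integral_eq_sub_of_hasDerivAt_of_le hpq
    (fun x _ => (hF x).continuousAt.continuousWithinAt)
    (fun x hx => (hF x).congr_deriv (hG hx).symm) hint]
  ring

lemma IsExpAffineOn.intervalIntegral_stiffness {α β b p q : ℝ} {u v : ℝ → ℝ}
    (hαβ : α * β = b) (hβ : β ≠ 0) (hpq : p < q) (hu : IsExpAffineOn β u (Icc p q))
    (hv : IsExpAffineOn β v (Icc p q)) :
    IntervalIntegrable (fun x => α * deriv u x * deriv v x + b * deriv u x * v x) volume p q ∧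
    ∫ x in p..q, α * deriv u x * deriv v x + b * deriv u x * v x
      = b * (u q - u p) * (exp (β * (q - p)) * v q - v p) / (exp (β * (q - p)) - 1) := by
  obtain ⟨a, c, hac⟩ := hu
  obtain ⟨d, g, hdg⟩ := hv
  obtain ⟨hint, hval⟩ := intervalIntegral_stiffness_of_eqOn_Ioo hαβ hpq.le
    (hac.mono Ioo_subset_Icc_self) (hdg.mono Ioo_subset_Icc_self)
  refine ⟨hint, ?_⟩
  have hE : exp (β * (q - p)) - 1 ≠ 0 := by
    rw [sub_ne_zero, Ne, exp_eq_one_iff]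
    exact mul_ne_zero hβ (sub_ne_zero.2 hpq.ne')
  have hq : exp (β * q) = exp (β * p) * exp (β * (q - p)) := by rw [← exp_add]; ring_nf
  rw [hval, hac ⟨hpq.le, le_rfl⟩, hac ⟨le_rfl, hpq.le⟩, hdg ⟨hpq.le, le_rfl⟩, hdg ⟨le_rfl, hpq.le⟩]
  beta_reduce
  rw [hq, eq_div_iff hE]
  ring

lemma integral_Ioo_stiffness_eq_sum {α β b H : ℝ} {N : ℕ} {u v : ℝ → ℝ}
    (hαβ : α * β = b) (hβ : β ≠ 0) (hH : 0 < H) (hNH : N * H = 1)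
    (hu : ∀ k < N, IsExpAffineOn β u (Icc (k * H) (↑(k + 1) * H)))
    (hv : ∀ k < N, IsExpAffineOn β v (Icc (k * H) (↑(k + 1) * H))) :
    ∫ x in Ioo 0 1, α * deriv u x * deriv v x + b * deriv u x * v x
      = ∑ k ∈ Finset.range N, b * (u (↑(k + 1) * H) - u (k * H))
          * (exp (β * H) * v (↑(k + 1) * H) - v (k * H)) / (exp (β * H) - 1) := by
  have hstep (k : ℕ) : (↑(k + 1) : ℝ) * H - k * H = H := by push_cast; ring
  have helem (k : ℕ) (hk : k < N) := IsExpAffineOn.intervalIntegral_stiffness hαβ hβ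
    (by rw [← sub_pos, hstep]; exact hH) (hu k hk) (hv k hk)
  have hsum := intervalIntegral.sum_integral_adjacent_intervals (a := fun k : ℕ => (k : ℝ) * H)
    (fun k hk => (helem k hk).1)
  simp only [Nat.cast_zero, zero_mul, hNH] at hsum
  rw [← integral_Ioc_eq_integral_Ioo, ← intervalIntegral.integral_of_le zero_le_one, ← hsum]
  refine Finset.sum_congr rfl fun k hk => ?_
  rw [(helem k (Finset.mem_range.1 hk)).2, hstep]

lemma sum_range_kronecker {N i j : ℕ} (E : ℝ) (hi : 1 ≤ i) (hi' : i < N) (hj : 1 ≤ j) :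
    ∑ k ∈ Finset.range N, ((if j = k + 1 then 1 else 0) - (if j = k then 1 else 0))
        * (E * (if i = k + 1 then 1 else 0) - (if i = k then 1 else 0))
      = (E + 1) * (if i = j then 1 else 0) - (if j = i + 1 then 1 else 0)
          - E * (if i = j + 1 then 1 else 0) := by
  obtain ⟨i, rfl⟩ : ∃ i', i = i' + 1 := ⟨i - 1, by omega⟩
  obtain ⟨j, rfl⟩ : ∃ j', j = j' + 1 := ⟨j - 1, by omega⟩
  simp only [mul_sub, sub_mul, Finset.sum_sub_distrib, ite_mul, mul_ite, one_mul, mul_one,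
    zero_mul, mul_zero, add_left_inj, Finset.sum_ite_eq, Finset.mem_range, hi',
    (by omega : i < N), if_true]
  split_ifs <;> first | omega | ring

lemma integral_Ioo_stiffness_of_nodal {α β b H : ℝ} {N i j : ℕ} {u v : ℝ → ℝ}
    (hαβ : α * β = b) (hβ : β ≠ 0) (hH : 0 < H) (hNH : N * H = 1)
    (hu : ∀ k < N, IsExpAffineOn β u (Icc (k * H) (↑(k + 1) * H)))
    (hv : ∀ k < N, IsExpAffineOn β v (Icc (k * H) (↑(k + 1) * H)))
    (hi : 1 ≤ i) (hi' : i < N) (hj : 1 ≤ j)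
    (hu_node : ∀ k ≤ N, u (k * H) = if j = k then 1 else 0)
    (hv_node : ∀ k ≤ N, v (k * H) = if i = k then 1 else 0) :
    ∫ x in Ioo 0 1, α * deriv u x * deriv v x + b * deriv u x * v x
      = b * ((exp (β * H) + 1) * (if i = j then 1 else 0) - (if j = i + 1 then 1 else 0)
          - exp (β * H) * (if i = j + 1 then 1 else 0)) / (exp (β * H) - 1) := by
  rw [integral_Ioo_stiffness_eq_sum hαβ hβ hH hNH hu hv,
    ← sum_range_kronecker (exp (β * H)) hi hi' hj, Finset.mul_sum, Finset.sum_div]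
  refine Finset.sum_congr rfl fun k hk => ?_
  have hk := Finset.mem_range.1 hk
  rw [hu_node (k + 1) hk, hu_node k hk.le, hv_node (k + 1) hk, hv_node k hk.le]
  ring

lemma isExpAffineOn_element_of_hat {α b H : ℝ} {f : ℝ → ℝ} {i : ℕ} (hα : α ≠ 0) (hb : b ≠ 0)
    (hH : 0 < H) (hcont : Continuous f)
    (hsupp : ∀ x, x ∉ Icc (((i : ℝ) - 1) * H) (((i : ℝ) + 1) * H) → f x = 0)
    (hdiff : ∀ x ∈ Ioo (((i : ℝ) - 1) * H) ((i : ℝ) * H) ∪ Ioo ((i : ℝ) * H) (((i : ℝ) + 1) * H),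
      DifferentiableAt ℝ f x ∧ DifferentiableAt ℝ (deriv f) x)
    (hode : ∀ x ∈ Ioo (((i : ℝ) - 1) * H) ((i : ℝ) * H) ∪ Ioo ((i : ℝ) * H) (((i : ℝ) + 1) * H),
      α * deriv (deriv f) x = b * deriv f x) (k : ℕ) :
    IsExpAffineOn (b / α) f (Icc (k * H) (↑(k + 1) * H)) := by
  have hk : (k : ℝ) * H < ↑(k + 1) * H := by push_cast; nlinarith
  refine IsExpAffineOn.Icc_of_Ioo ?_ hcont hk
  have hsolve (hs : Ioo (k * H) (↑(k + 1) * H) ⊆ Ioo (((i : ℝ) - 1) * H) ((i : ℝ) * H) ∪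
      Ioo ((i : ℝ) * H) (((i : ℝ) + 1) * H)) :
      IsExpAffineOn (b / α) f (Ioo (k * H) (↑(k + 1) * H)) :=
    isExpAffineOn_Ioo_of_deriv_deriv_eq (div_ne_zero hb hα) (fun x hx => hdiff x (hs hx))
      fun x hx => by rw [div_mul_eq_mul_div, eq_div_iff hα, ← hode x (hs hx)]; ring
  rcases lt_trichotomy (k + 1) i with hki | rfl | hik
  · refine IsExpAffineOn.of_eqOn_zero fun x hx => hsupp x fun hx' => ?_
    have : (k : ℝ) + 1 + 1 ≤ i := by exact_mod_cast hki
    push_cast at hx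
    nlinarith [hx.2, hx'.1]
  · exact hsolve (subset_union_left.trans' (Ioo_subset_Ioo (le_of_eq (by push_cast; ring)) le_rfl))
  rcases eq_or_lt_of_le (Nat.lt_succ_iff.1 hik) with rfl | hik
  · exact hsolve (subset_union_right.trans' (Ioo_subset_Ioo le_rfl (le_of_eq (by push_cast; ring))))
  · refine IsExpAffineOn.of_eqOn_zero fun x hx => hsupp x fun hx' => ?_
    have : (i : ℝ) + 1 ≤ k := by exact_mod_cast hik
    nlinarith [hx.1, hx'.2]

lemma cosh_div_sinh_eq (t : ℝ) : cosh t / sinh t = (exp (2 * t) + 1) / (exp (2 * t) - 1) := by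
  have h : exp (2 * t) = exp t * exp t := by rw [← exp_add]; ring_nf
  rw [cosh_eq, sinh_eq, exp_neg, h, div_div_div_cancel_right₀ two_ne_zero,
    ← mul_div_mul_right _ _ (exp_pos t).ne']
  congr 1 <;> field_simp

lemma abs_mul_cosh_div_sinh (b s : ℝ) :
    |b| * (cosh (|b| * s) / sinh (|b| * s)) = b * (cosh (b * s) / sinh (b * s)) := by
  rcases abs_cases b with ⟨h, -⟩ | ⟨h, -⟩
  · rw [h]
  · rw [h, neg_mul b s, cosh_neg, sinh_neg, div_neg, neg_mul_neg]

theorem stmt17_general (α b : ℝ) (hα : 0 < α) (hb : b ≠ 0)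
    (N : ℕ) (H : ℝ) (hH : H = 1 / N)
    (φ : ℕ → ℝ → ℝ)
    (hcont : ∀ i : ℕ, 1 ≤ i → i ≤ N - 1 → Continuous (φ i))
    (hnode : ∀ i : ℕ, 1 ≤ i → i ≤ N - 1 → ∀ j : ℕ, j ≤ N →
      φ i ((j : ℝ) * H) = if i = j then 1 else 0)
    (hsupp : ∀ i : ℕ, 1 ≤ i → i ≤ N - 1 → ∀ x : ℝ,
      x ∉ Set.Icc (((i : ℝ) - 1) * H) (((i : ℝ) + 1) * H) → φ i x = 0)
    (hdiff : ∀ i : ℕ, 1 ≤ i → i ≤ N - 1 →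
      ∀ x ∈ Set.Ioo (((i : ℝ) - 1) * H) ((i : ℝ) * H) ∪
          Set.Ioo ((i : ℝ) * H) (((i : ℝ) + 1) * H),
        DifferentiableAt ℝ (φ i) x ∧ DifferentiableAt ℝ (deriv (φ i)) x)
    (hode : ∀ i : ℕ, 1 ≤ i → i ≤ N - 1 →
      ∀ x ∈ Set.Ioo (((i : ℝ) - 1) * H) ((i : ℝ) * H) ∪
          Set.Ioo ((i : ℝ) * H) (((i : ℝ) + 1) * H),
        α * deriv (deriv (φ i)) x = b * deriv (φ i) x) :
    (∀ i : ℕ, 1 ≤ i → i ≤ N - 1 →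
      (∫ x in Set.Ioo (0:ℝ) 1, (α * deriv (φ i) x * deriv (φ i) x
          + b * deriv (φ i) x * φ i x))
        = |b| * (Real.cosh (|b| * H / (2 * α)) / Real.sinh (|b| * H / (2 * α)))) ∧
    (∀ i : ℕ, 2 ≤ i → i ≤ N - 1 →
      (∫ x in Set.Ioo (0:ℝ) 1, (α * deriv (φ (i - 1)) x * deriv (φ i) x
          + b * deriv (φ (i - 1)) x * φ i x))
        = -b * Real.exp (b * H / α) / (Real.exp (b * H / α) - 1)) ∧
    (∀ i : ℕ, 1 ≤ i → i + 1 ≤ N - 1 →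
      (∫ x in Set.Ioo (0:ℝ) 1, (α * deriv (φ (i + 1)) x * deriv (φ i) x
          + b * deriv (φ (i + 1)) x * φ i x))
        = -b / (Real.exp (b * H / α) - 1)) ∧
    (∀ i j : ℕ, 1 ≤ i → i ≤ N - 1 → 1 ≤ j → j ≤ N - 1 → (i + 1 < j ∨ j + 1 < i) →
      (∫ x in Set.Ioo (0:ℝ) 1, (α * deriv (φ j) x * deriv (φ i) x
          + b * deriv (φ j) x * φ i x)) = 0) := by
  set E := exp (b * H / α)
  have entry (i j : ℕ) (hi : 1 ≤ i) (hi' : i ≤ N - 1) (hj : 1 ≤ j) (hj' : j ≤ N - 1) :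
      ∫ x in Ioo (0:ℝ) 1, α * deriv (φ j) x * deriv (φ i) x + b * deriv (φ j) x * φ i x
        = b * ((E + 1) * (if i = j then 1 else 0) - (if j = i + 1 then 1 else 0)
            - E * (if i = j + 1 then 1 else 0)) / (E - 1) := by
    have hN : (0 : ℝ) < N := by exact_mod_cast (by omega : 0 < N)
    have hH0 : 0 < H := by rw [hH]; positivity
    have hφ (l : ℕ) (hl : 1 ≤ l) (hl' : l ≤ N - 1) (k : ℕ) :=
      isExpAffineOn_element_of_hat hα.ne' hb hH0 (hcont l hl hl') (hsupp l hl hl')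
        (hdiff l hl hl') (hode l hl hl') k
    rw [integral_Ioo_stiffness_of_nodal (mul_div_cancel₀ b hα.ne') (div_ne_zero hb hα.ne') hH0
      (by rw [hH]; field_simp) (fun k _ => hφ j hj hj' k) (fun k _ => hφ i hi hi' k) hi
      (by omega) hj (hnode j hj hj') (hnode i hi hi'), show b / α * H = b * H / α by ring]
  have hcoth : |b| * (cosh (|b| * H / (2 * α)) / sinh (|b| * H / (2 * α)))
      = b * (E + 1) / (E - 1) := by
    rw [mul_div_assoc, abs_mul_cosh_div_sinh, cosh_div_sinh_eq,
      show 2 * (b * (H / (2 * α))) = b * H / α by field_simp]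
    exact (mul_div_assoc _ _ _).symm
  refine ⟨fun i hi hi' => ?_, fun i hi hi' => ?_, fun i hi hi' => ?_,
    fun i j hi hi' hj hj' hij => ?_⟩
  · rw [entry i i hi hi' hi hi', hcoth, if_pos rfl, if_neg (by omega)]
    ring
  · obtain ⟨m, rfl⟩ : ∃ m, i = m + 1 := ⟨i - 1, by omega⟩
    rw [Nat.add_sub_cancel, entry (m + 1) m (by omega) hi' (by omega) (by omega), if_neg (by omega),
      if_neg (by omega), if_pos rfl]
    ring
  · rw [entry i (i + 1) hi (by omega) (by omega) hi', if_neg (by omega), if_pos rfl,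
      if_neg (by omega)]
    ring
  · rw [entry i j hi hi' hj hj', if_neg (by omega), if_neg (by omega), if_neg (by omega)]
    ring

/-- in the one-dimensional single-scale problem `−αu'' + bu' = f` on
`(0,1)` (uniform mesh of size `H = 1/N`), the Adv-MsFEM basis functions `φᵢ`
(`1 ≤ i ≤ N−1`), which are continuous hat-like functions solving `−αφ'' + bφ' = 0` in
each supporting element and matching the `P¹` nodal values, produce a tridiagonal
Galerkin stiffness matrix `M i j = ∫₀¹ αφⱼ'φᵢ' + bφⱼ'φᵢ` with diagonal entries
`|b| coth(|b|H/(2α))`, sub-diagonal entries `−b e^{bH/α}/(e^{bH/α}−1)` and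
super-diagonal entries `−b/(e^{bH/α}−1)`. -/
theorem stmt17 (α b : ℝ) (hα : 0 < α) (hb : b ≠ 0)
    (N : ℕ) (hN : 2 ≤ N) (H : ℝ) (hH : H = 1 / N)
    (φ : ℕ → ℝ → ℝ)
    (hcont : ∀ i : ℕ, 1 ≤ i → i ≤ N - 1 → Continuous (φ i))
    (hnode : ∀ i : ℕ, 1 ≤ i → i ≤ N - 1 → ∀ j : ℕ, j ≤ N →
      φ i ((j : ℝ) * H) = if i = j then 1 else 0)
    (hsupp : ∀ i : ℕ, 1 ≤ i → i ≤ N - 1 → ∀ x : ℝ,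
      x ∉ Set.Icc (((i : ℝ) - 1) * H) (((i : ℝ) + 1) * H) → φ i x = 0)
    (hdiff : ∀ i : ℕ, 1 ≤ i → i ≤ N - 1 →
      ∀ x ∈ Set.Ioo (((i : ℝ) - 1) * H) ((i : ℝ) * H) ∪
          Set.Ioo ((i : ℝ) * H) (((i : ℝ) + 1) * H),
        DifferentiableAt ℝ (φ i) x ∧ DifferentiableAt ℝ (deriv (φ i)) x)
    (hode : ∀ i : ℕ, 1 ≤ i → i ≤ N - 1 →
      ∀ x ∈ Set.Ioo (((i : ℝ) - 1) * H) ((i : ℝ) * H) ∪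
          Set.Ioo ((i : ℝ) * H) (((i : ℝ) + 1) * H),
        α * deriv (deriv (φ i)) x = b * deriv (φ i) x) :
    (∀ i : ℕ, 1 ≤ i → i ≤ N - 1 →
      (∫ x in Set.Ioo (0:ℝ) 1, (α * deriv (φ i) x * deriv (φ i) x
          + b * deriv (φ i) x * φ i x))
        = |b| * (Real.cosh (|b| * H / (2 * α)) / Real.sinh (|b| * H / (2 * α)))) ∧
    (∀ i : ℕ, 2 ≤ i → i ≤ N - 1 →
      (∫ x in Set.Ioo (0:ℝ) 1, (α * deriv (φ (i - 1)) x * deriv (φ i) x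
          + b * deriv (φ (i - 1)) x * φ i x))
        = -b * Real.exp (b * H / α) / (Real.exp (b * H / α) - 1)) ∧
    (∀ i : ℕ, 1 ≤ i → i + 1 ≤ N - 1 →
      (∫ x in Set.Ioo (0:ℝ) 1, (α * deriv (φ (i + 1)) x * deriv (φ i) x
          + b * deriv (φ (i + 1)) x * φ i x))
        = -b / (Real.exp (b * H / α) - 1)) ∧
    (∀ i j : ℕ, 1 ≤ i → i ≤ N - 1 → 1 ≤ j → j ≤ N - 1 → (i + 1 < j ∨ j + 1 < i) →
      (∫ x in Set.Ioo (0:ℝ) 1, (α * deriv (φ j) x * deriv (φ i) x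
          + b * deriv (φ j) x * φ i x)) = 0) :=
  stmt17_general α b hα hb N H hH φ hcont hnode hsupp hdiff hode
end
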